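/- arXiv:1810.01737 — 4 statements merged into one kernel-verified Lean document; each statement's English description precedes it below -/
import Mathlib

section
/- Let k be a field and n ≥ 1 an integer. Let D be a diagonal n×n matrix over k whose diagonal entries are pairwise distinct, and let J be the n×n matrix over k all of whose entries equal 1. Then the k-subalgebra of the matrix algebra M_n(k) generated by D and J is all of M_n(k). -/
/-!
The diagonal matrix units `E i i` are polynomials in `D`: evaluate at `D` the Lagrange
interpolation polynomial that is `1` at `d i` and `0` at the other `d j`. Then
`E i i * J * E j j = E i j`, and the matrix units span `M_n(k)`.
-/

open Polynomial Matrix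

theorem pi_single_one_mem_adjoin_of_injective {ι k : Type*} [Fintype ι] [DecidableEq ι]
    [Field k] {d : ι → k} (hd : Function.Injective d) (i : ι) :
    Pi.single i 1 ∈ Algebra.adjoin k {d} := by
  let p := Lagrange.interpolate Finset.univ d (Pi.single i 1)
  have hp : aeval d p = Pi.single i 1 := by
    funext j
    rw [aeval_pi_apply₂, coe_aeval_eq_eval]
    exact Lagrange.eval_interpolate_at_node _ hd.injOn (Finset.mem_univ j)
  exact hp ▸ aeval_mem_adjoin_singleton k d

theorem Matrix.single_one_mem_adjoin_diagonal_of_injective {ι k : Type*} [Fintype ι]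
    [DecidableEq ι] [Field k] {d : ι → k} (hd : Function.Injective d) (i : ι) :
    single i i (1 : k) ∈ Algebra.adjoin k {diagonal d} := by
  have hmap : (Algebra.adjoin k {d}).map (diagonalAlgHom k) = Algebra.adjoin k {diagonal d} := by
    rw [AlgHom.map_adjoin, Set.image_singleton, diagonalAlgHom_apply]
  rw [← hmap, ← diagonal_single]
  exact Subalgebra.mem_map.mpr ⟨_, pi_single_one_mem_adjoin_of_injective hd i, rfl⟩

theorem Matrix.subalgebra_eq_top_of_single_one_mem {n R : Type*} [Fintype n] [DecidableEq n]
    [CommSemiring R] (S : Subalgebra R (Matrix n n R)) (h : ∀ i j, single i j (1 : R) ∈ S) :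
    S = ⊤ := by
  refine eq_top_iff.mpr fun M _ => Matrix.induction_on' M S.zero_mem (fun _ _ => S.add_mem) ?_
  intro i j x
  simpa [smul_single] using S.smul_mem (h i j) x

theorem stmt_0_general {k : Type*} [Field k] {n : ℕ}
    (d : Fin n → k) (hd : Function.Injective d)
    (J : Matrix (Fin n) (Fin n) k) (hJ : ∀ i j, J i j = 1) :
    Algebra.adjoin k ({Matrix.diagonal d, J} : Set (Matrix (Fin n) (Fin n) k)) = ⊤ := by
  set A := Algebra.adjoin k ({diagonal d, J} : Set (Matrix (Fin n) (Fin n) k))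
  have hJA : J ∈ A := Algebra.subset_adjoin (Set.mem_insert_of_mem _ rfl)
  have hE : ∀ i, single i i (1 : k) ∈ A := fun i =>
    Algebra.adjoin_mono (Set.singleton_subset_iff.mpr (Set.mem_insert _ _))
      (single_one_mem_adjoin_diagonal_of_injective hd i)
  refine subalgebra_eq_top_of_single_one_mem A fun i j => ?_
  simpa [hJ] using A.mul_mem (A.mul_mem (hE i) hJA) (hE j)

/-- Let `k` be a field and `n ≥ 1`. If `D` is a diagonal `n × n` matrix over `k` with
pairwise distinct diagonal entries and `J` is the all-ones `n × n` matrix, then the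
`k`-subalgebra of `M_n(k)` generated by `D` and `J` is all of `M_n(k)`. -/
theorem stmt_0 {k : Type*} [Field k] {n : ℕ} (hn : 1 ≤ n)
    (d : Fin n → k) (hd : Function.Injective d)
    (J : Matrix (Fin n) (Fin n) k) (hJ : ∀ i j, J i j = 1) :
    Algebra.adjoin k ({Matrix.diagonal d, J} : Set (Matrix (Fin n) (Fin n) k)) = ⊤ :=
  stmt_0_general d hd J hJ
end

section
/- Let k be a field, n ≥ 1 an integer, and S an arbitrary subset of the matrix algebra M_n(k). Then the k-linear span of the set of all products of at most n² elements of S (where the empty product is the identity matrix) equals the underlying k-submodule of the k-subalgebra of M_n(k) generated by S. -/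
/-!
Put `P = span (1 ∪ S)`. The span of the products of at most `m` elements of `S` is `P ^ m`, and
since `1 ∈ P` these powers form an increasing chain of subspaces of `M_n(k)`, of dimension `n²`.
The chain cannot increase strictly `n² + 1` times in a row, so `P ^ (m + 1) = P ^ m` for some
`m ≤ n²`, after which it is constant. Hence `P ^ (n²)` contains every `P ^ j`, is closed under
multiplication, and is therefore the algebra generated by `S`.
-/

open Pointwise Module

section Products

variable {M : Type*} [Monoid M]

lemma List.prod_filter_ne_one [DecidableEq M] (l : List M) :
    (l.filter (· ≠ 1)).prod = l.prod := by
  induction l with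
  | nil => rfl
  | cons a l ih =>
    rw [List.filter_cons]
    split_ifs with ha <;> simp_all

lemma Set.mem_pow_iff_exists_list {s : Set M} {m : ℕ} {x : M} :
    x ∈ s ^ m ↔ ∃ l : List M, l.length = m ∧ (∀ y ∈ l, y ∈ s) ∧ x = l.prod := by
  constructor
  · intro hx
    obtain ⟨f, rfl⟩ := Set.mem_pow.mp hx
    refine ⟨List.ofFn fun i => (f i : M), by simp, fun y hy => ?_, rfl⟩
    obtain ⟨i, rfl⟩ := List.mem_ofFn.mp hy
    exact (f i).2
  · rintro ⟨l, rfl, hl, rfl⟩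
    exact Set.mem_pow.mpr ⟨fun i => ⟨l.get i, hl _ (l.get_mem i)⟩, by simp⟩

lemma Set.insert_one_pow_eq_setOf_list_prod (s : Set M) (m : ℕ) :
    insert 1 s ^ m = {x : M | ∃ l : List M, l.length ≤ m ∧ (∀ y ∈ l, y ∈ s) ∧ x = l.prod} := by
  classical
  ext x
  rw [Set.mem_pow_iff_exists_list, Set.mem_ofPred_eq]
  constructor
  · rintro ⟨l, rfl, hl, rfl⟩
    refine ⟨l.filter (· ≠ 1), List.length_filter_le _ _, fun y hy => ?_, l.prod_filter_ne_one.symm⟩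
    obtain ⟨hyl, hy1⟩ := List.mem_filter.mp hy
    exact (hl y hyl).resolve_left (by simpa using hy1)
  · rintro ⟨l, hlen, hl, rfl⟩
    refine ⟨l ++ List.replicate (m - l.length) 1, by simp [hlen], fun y hy => ?_, by simp⟩
    rcases List.mem_append.mp hy with hy | hy
    · exact Set.mem_insert_of_mem _ (hl y hy)
    · exact List.eq_of_mem_replicate hy ▸ Set.mem_insert _ _

end Products

lemma pow_le_pow_of_pow_succ_eq {M : Type*} [Monoid M] [Preorder M] [MulLeftMono M] {a : M}
    (ha : 1 ≤ a) {m : ℕ} (hm : a ^ (m + 1) = a ^ m) (j : ℕ) : a ^ j ≤ a ^ m := by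
  rcases le_total j m with hj | hj
  · exact pow_le_pow_right' ha hj
  · obtain ⟨i, rfl⟩ := Nat.exists_eq_add_of_le hj
    suffices a ^ (m + i) = a ^ m from this.le
    clear hj
    induction i with
    | zero => rfl
    | succ i ih => rw [← add_assoc, pow_succ, ih, ← pow_succ, hm]

theorem Submodule.exists_le_finrank_eq_succ_of_monotone {K V : Type*} [DivisionRing K]
    [AddCommGroup V] [Module K V] [FiniteDimensional K V] {f : ℕ → Submodule K V}
    (hf : Monotone f) : ∃ m ≤ finrank K V, f (m + 1) = f m := by
  by_contra! h
  have hlen : ∀ m ≤ finrank K V + 1, m ≤ finrank K (f m) := by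
    intro m hm
    induction m with
    | zero => exact Nat.zero_le _
    | succ m ih =>
      have hlt : f m < f (m + 1) := (hf m.le_succ).lt_of_ne (h m (by omega)).symm
      exact (ih (by omega)).trans_lt (Submodule.finrank_lt_finrank_of_lt hlt)
  have := (hlen _ le_rfl).trans (Submodule.finrank_le (f (finrank K V + 1)))
  omega

section Adjoin

variable {K A : Type*} [Field K] [Ring A] [Algebra K A] [FiniteDimensional K A]

theorem Submodule.pow_le_pow_finrank {P : Submodule K A} (hP : 1 ≤ P) (j : ℕ) :
    P ^ j ≤ P ^ finrank K A := by
  obtain ⟨m, hm, hstab⟩ :=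
    Submodule.exists_le_finrank_eq_succ_of_monotone fun _ _ => pow_le_pow_right' hP
  exact (pow_le_pow_of_pow_succ_eq hP hstab j).trans (pow_le_pow_right' hP hm)

theorem Algebra.adjoin_eq_span_insert_one_pow_finrank (s : Set A) :
    Subalgebra.toSubmodule (Algebra.adjoin K s) =
      Submodule.span K (insert 1 s) ^ finrank K A := by
  set P := Submodule.span K (insert 1 s)
  have hP : 1 ≤ P := Submodule.one_le.mpr (Submodule.subset_span (Set.mem_insert _ _))
  apply le_antisymm
  · have hmul {x y : A} (hx : x ∈ P ^ finrank K A) (hy : y ∈ P ^ finrank K A) :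
        x * y ∈ P ^ finrank K A :=
      Submodule.pow_le_pow_finrank hP _ (pow_add P _ _ ▸ Submodule.mul_mem_mul hx hy)
    have hs : s ⊆ ↑(P ^ finrank K A) := fun x hx => Submodule.pow_le_pow_finrank hP 1
      (by rw [pow_one]; exact Submodule.subset_span (Set.mem_insert_of_mem _ hx))
    exact Algebra.adjoin_le (S := (P ^ finrank K A).toSubalgebra
      (Submodule.one_le.mp (Left.one_le_pow_of_le hP _)) fun _ _ => hmul) hs
  · rw [Submodule.span_pow, Submodule.span_le]
    exact Submonoid.pow_subset (S := (Algebra.adjoin K s).toSubmonoid)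
      (Set.insert_subset (one_mem _) Algebra.subset_adjoin)

end Adjoin

theorem stmt_2_general {k : Type*} [Field k] {n : ℕ}
    (S : Set (Matrix (Fin n) (Fin n) k)) :
    Submodule.span k {M : Matrix (Fin n) (Fin n) k |
        ∃ l : List (Matrix (Fin n) (Fin n) k),
          l.length ≤ n ^ 2 ∧ (∀ x ∈ l, x ∈ S) ∧ M = l.prod} =
      Subalgebra.toSubmodule (Algebra.adjoin k S) := by
  rw [← Set.insert_one_pow_eq_setOf_list_prod, ← Submodule.span_pow,
    Algebra.adjoin_eq_span_insert_one_pow_finrank, Module.finrank_matrix]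
  simp [sq]

/-- Let `k` be a field, `n ≥ 1`, and `S ⊆ M_n(k)`. The `k`-linear span of the set of
all products of at most `n²` elements of `S` (the empty product being `1`) equals the
underlying `k`-submodule of the `k`-subalgebra of `M_n(k)` generated by `S`. -/
theorem stmt_2 {k : Type*} [Field k] {n : ℕ} (hn : 1 ≤ n)
    (S : Set (Matrix (Fin n) (Fin n) k)) :
    Submodule.span k {M : Matrix (Fin n) (Fin n) k |
        ∃ l : List (Matrix (Fin n) (Fin n) k),
          l.length ≤ n ^ 2 ∧ (∀ x ∈ l, x ∈ S) ∧ M = l.prod} =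
      Subalgebra.toSubmodule (Algebra.adjoin k S) :=
  stmt_2_general S
end

section
/- Let k be an algebraically closed field and n ≥ 1 an integer. There exists a nonzero polynomial F in 2n² variables over k (one variable for each entry of an ordered pair of n×n matrices) such that: (i) for all A, B ∈ GL_n(k), if F evaluated at the entries of (A, B) is nonzero, then the subgroup generated by A and B acts irreducibly on kⁿ (i.e., the only subspaces of kⁿ invariant under both A and B are 0 and kⁿ); and (ii) there exist A, B ∈ GL_n(k) at which F evaluates to a nonzero element. (Consequently, the set of pairs (A, B) ∈ GL_n(k) × GL_n(k) generating an irreducible subgroup contains a nonempty Zariski-dense open subset of GL_n(k) × GL_n(k).) -/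
/-!
The polynomial is the determinant of the `n² × n²` matrix whose rows list the entries of the
words `A ^ i * B * A ^ j` with `i, j < n`. Where it does not vanish these words span the whole
matrix algebra, so a subspace stable under `A` and `B` is stable under every matrix and is
therefore trivial. It does not vanish at `A = diagonal μ`, `B = vandermonde μ` with distinct
nonzero `μ`, since there the word matrix factors as `(Vᵀ ⊗ₖ Vᵀ) * diagonal (μ p ^ q)`.
-/

open Matrix MvPolynomial
open scoped Kronecker

namespace Matrix

section Stabilizer

variable {ι R : Type*} [Fintype ι] [DecidableEq ι]

def mulVecStabilizer [CommRing R] (W : Submodule R (ι → R)) : Subalgebra R (Matrix ι ι R) where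
  carrier := {C | ∀ x ∈ W, C *ᵥ x ∈ W}
  mul_mem' {C D} hC hD x hx := by
    rw [← mulVec_mulVec]
    exact hC _ (hD x hx)
  add_mem' {C D} hC hD x hx := by
    rw [add_mulVec]
    exact W.add_mem (hC x hx) (hD x hx)
  algebraMap_mem' r x hx := by
    rw [Algebra.algebraMap_eq_smul_one, smul_mulVec, one_mulVec]
    exact W.smul_mem r hx

theorem eq_bot_or_eq_top_of_forall_mulVec_mem [Field R] (W : Submodule R (ι → R))
    (hW : ∀ C : Matrix ι ι R, ∀ x ∈ W, C *ᵥ x ∈ W) : W = ⊥ ∨ W = ⊤ := by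
  refine or_iff_not_imp_left.mpr fun hbot => eq_top_iff.mpr fun y _ => ?_
  obtain ⟨x, hxW, hx⟩ := W.exists_mem_ne_zero_of_ne_bot hbot
  obtain ⟨t, ht⟩ := Function.ne_iff.mp hx
  have hxy : vecMulVec y (Pi.single t (x t)⁻¹) *ᵥ x = y := by
    rw [vecMulVec_mulVec, single_dotProduct, inv_mul_cancel₀ ht]
    simp
  exact hxy ▸ hW _ x hxW

end Stabilizer

section CommRing

variable {n : ℕ} {R : Type*} [CommRing R]

def wordMatrix (A B : Matrix (Fin n) (Fin n) R) : Matrix (Fin n × Fin n) (Fin n × Fin n) R :=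
  of fun w pq => (A ^ (w.1 : ℕ) * B * A ^ (w.2 : ℕ)) pq.1 pq.2

theorem map_wordMatrix {S : Type*} [CommRing S] (f : R →+* S) (A B : Matrix (Fin n) (Fin n) R) :
    (wordMatrix A B).map f = wordMatrix (A.map f) (B.map f) := by
  ext w pq
  simp only [wordMatrix, map_apply, of_apply]
  change _ = (f.mapMatrix A ^ _ * f.mapMatrix B * f.mapMatrix A ^ _) pq.1 pq.2
  rw [← map_pow, ← map_pow, ← map_mul, ← map_mul]
  rfl

theorem map_eval_map_rename_mvPolynomialX {m σ : Type*} (s : m × m → σ) (φ : σ → R) :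
    ((mvPolynomialX m m R).map (rename s)).map (eval φ) = of fun i j => φ (s (i, j)) := by
  ext i j
  simp [mvPolynomialX]

variable (n R) in
noncomputable def wordDet : MvPolynomial ((Fin n × Fin n) ⊕ (Fin n × Fin n)) R :=
  (wordMatrix ((mvPolynomialX _ _ R).map (rename Sum.inl))
    ((mvPolynomialX _ _ R).map (rename Sum.inr))).det

theorem eval_wordDet (A B : Matrix (Fin n) (Fin n) R) :
    eval (Sum.elim (fun ij : Fin n × Fin n => A ij.1 ij.2) (fun ij => B ij.1 ij.2))
      (wordDet n R) = (wordMatrix A B).det := by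
  rw [wordDet, RingHom.map_det, RingHom.mapMatrix_apply, map_wordMatrix,
    map_eval_map_rename_mvPolynomialX, map_eval_map_rename_mvPolynomialX]
  rfl

theorem wordMatrix_diagonal_vandermonde (μ : Fin n → R) :
    wordMatrix (diagonal μ) (vandermonde μ) =
      ((vandermonde μ)ᵀ ⊗ₖ (vandermonde μ)ᵀ) * diagonal fun pq => μ pq.1 ^ (pq.2 : ℕ) := by
  ext w pq
  simp only [wordMatrix, of_apply, diagonal_pow, diagonal_mul, mul_diagonal, kroneckerMap_apply,
    transpose_apply, vandermonde_apply, Pi.pow_apply]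
  ring

theorem det_wordMatrix_diagonal_vandermonde_ne_zero [IsDomain R] {μ : Fin n → R}
    (hμ : Function.Injective μ) (hμ0 : ∀ i, μ i ≠ 0) :
    (wordMatrix (diagonal μ) (vandermonde μ)).det ≠ 0 := by
  have hV := det_vandermonde_ne_zero_iff.mpr hμ
  rw [wordMatrix_diagonal_vandermonde, det_mul, det_kronecker, det_transpose, det_diagonal]
  exact mul_ne_zero (mul_ne_zero (pow_ne_zero _ hV) (pow_ne_zero _ hV))
    (Finset.prod_ne_zero_iff.mpr fun pq _ => pow_ne_zero _ (hμ0 pq.1))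

end CommRing

section Field

variable {n : ℕ} {k : Type*} [Field k]

theorem span_words_eq_top_of_det_wordMatrix_ne_zero {A B : Matrix (Fin n) (Fin n) k}
    (h : (wordMatrix A B).det ≠ 0) :
    Submodule.span k (Set.range fun w : Fin n × Fin n => A ^ (w.1 : ℕ) * B * A ^ (w.2 : ℕ)) =
      ⊤ := by
  have hrows : LinearIndependent k (wordMatrix A B).row := linearIndependent_rows_of_det_ne_zero h
  refine (LinearIndependent.of_comp
    (LinearMap.pi fun pq : Fin n × Fin n => entryLinearMap k k pq.1 pq.2) hrows)
    |>.span_eq_top_of_card_eq_finrank' ?_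
  simp [Module.finrank_matrix]

theorem eq_bot_or_eq_top_of_det_wordMatrix_ne_zero {A B : Matrix (Fin n) (Fin n) k}
    (h : (wordMatrix A B).det ≠ 0) (W : Submodule k (Fin n → k))
    (hA : ∀ x ∈ W, A *ᵥ x ∈ W) (hB : ∀ x ∈ W, B *ᵥ x ∈ W) : W = ⊥ ∨ W = ⊤ := by
  have hAS : A ∈ mulVecStabilizer W := hA
  have hBS : B ∈ mulVecStabilizer W := hB
  have hS : Subalgebra.toSubmodule (mulVecStabilizer W) = ⊤ := by
    rw [eq_top_iff, ← span_words_eq_top_of_det_wordMatrix_ne_zero h, Submodule.span_le]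
    rintro _ ⟨w, rfl⟩
    exact Subalgebra.mul_mem _ (Subalgebra.mul_mem _ (Subalgebra.pow_mem _ hAS _) hBS)
      (Subalgebra.pow_mem _ hAS _)
  exact eq_bot_or_eq_top_of_forall_mulVec_mem W fun C =>
    (hS ▸ Submodule.mem_top : C ∈ Subalgebra.toSubmodule (mulVecStabilizer W))

end Field

end Matrix

theorem exists_injective_forall_ne_zero (k : Type*) [Zero k] [Infinite k] (n : ℕ) :
    ∃ μ : Fin n → k, Function.Injective μ ∧ ∀ i, μ i ≠ 0 :=
  let e := (Set.finite_singleton (0 : k)).infinite_compl.natEmbedding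
  ⟨fun i => e i, fun _ _ h => Fin.val_injective (e.injective (Subtype.ext h)), fun i => (e i).2⟩

theorem stmt_4_general {k : Type*} [Field k] [IsAlgClosed k] {n : ℕ} :
    ∃ F : MvPolynomial ((Fin n × Fin n) ⊕ (Fin n × Fin n)) k,
      F ≠ 0 ∧
      (∀ A B : GL (Fin n) k,
        MvPolynomial.eval
          (Sum.elim (fun ij : Fin n × Fin n => (A : Matrix (Fin n) (Fin n) k) ij.1 ij.2)
                    (fun ij : Fin n × Fin n => (B : Matrix (Fin n) (Fin n) k) ij.1 ij.2))
          F ≠ 0 →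
        ∀ W : Submodule k (Fin n → k),
          (∀ x ∈ W, Matrix.mulVec (A : Matrix (Fin n) (Fin n) k) x ∈ W) →
          (∀ x ∈ W, Matrix.mulVec (B : Matrix (Fin n) (Fin n) k) x ∈ W) →
          W = ⊥ ∨ W = ⊤) ∧
      (∃ A B : GL (Fin n) k,
        MvPolynomial.eval
          (Sum.elim (fun ij : Fin n × Fin n => (A : Matrix (Fin n) (Fin n) k) ij.1 ij.2)
                    (fun ij : Fin n × Fin n => (B : Matrix (Fin n) (Fin n) k) ij.1 ij.2))
          F ≠ 0) := by
  obtain ⟨μ, hμ, hμ0⟩ := exists_injective_forall_ne_zero k n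
  have hA : (diagonal μ).det ≠ 0 := by
    rw [det_diagonal]
    exact Finset.prod_ne_zero_iff.mpr fun i _ => hμ0 i
  have hB : (vandermonde μ).det ≠ 0 := det_vandermonde_ne_zero_iff.mpr hμ
  have hF : eval (Sum.elim (fun ij : Fin n × Fin n => diagonal μ ij.1 ij.2)
      (fun ij => vandermonde μ ij.1 ij.2)) (wordDet n k) ≠ 0 := by
    rw [eval_wordDet]
    exact det_wordMatrix_diagonal_vandermonde_ne_zero hμ hμ0
  refine ⟨wordDet n k, fun h0 => hF (by rw [h0, map_zero]), fun A B hAB W hAW hBW => ?_,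
    GeneralLinearGroup.mkOfDetNeZero _ hA, GeneralLinearGroup.mkOfDetNeZero _ hB, hF⟩
  rw [eval_wordDet] at hAB
  exact eq_bot_or_eq_top_of_det_wordMatrix_ne_zero hAB W hAW hBW

/-- Let `k` be an algebraically closed field and `n ≥ 1`. There exists a nonzero
polynomial `F` in `2n²` variables over `k` (one variable for each entry of a pair of
`n × n` matrices) such that: (i) whenever `F` is nonzero at the entries of a pair
`(A, B)` of invertible matrices, the subgroup generated by `A` and `B` acts
irreducibly on `kⁿ`; and (ii) `F` is nonzero at some pair `(A, B)` of invertible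
matrices. -/
theorem stmt_4 {k : Type*} [Field k] [IsAlgClosed k] {n : ℕ} (hn : 1 ≤ n) :
    ∃ F : MvPolynomial ((Fin n × Fin n) ⊕ (Fin n × Fin n)) k,
      F ≠ 0 ∧
      (∀ A B : GL (Fin n) k,
        MvPolynomial.eval
          (Sum.elim (fun ij : Fin n × Fin n => (A : Matrix (Fin n) (Fin n) k) ij.1 ij.2)
                    (fun ij : Fin n × Fin n => (B : Matrix (Fin n) (Fin n) k) ij.1 ij.2))
          F ≠ 0 →
        ∀ W : Submodule k (Fin n → k),
          (∀ x ∈ W, Matrix.mulVec (A : Matrix (Fin n) (Fin n) k) x ∈ W) →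
          (∀ x ∈ W, Matrix.mulVec (B : Matrix (Fin n) (Fin n) k) x ∈ W) →
          W = ⊥ ∨ W = ⊤) ∧
      (∃ A B : GL (Fin n) k,
        MvPolynomial.eval
          (Sum.elim (fun ij : Fin n × Fin n => (A : Matrix (Fin n) (Fin n) k) ij.1 ij.2)
                    (fun ij : Fin n × Fin n => (B : Matrix (Fin n) (Fin n) k) ij.1 ij.2))
          F ≠ 0) :=
  stmt_4_general
end

section
/- Let F be a finite field of characteristic p. Then the number of elements x ∈ F such that the subfield of F generated by x over the prime field F_p is a proper subfield of F is strictly less than 2·√|F|, where √|F| denotes the positive real square root of the cardinality of F. -/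
/-!
If `x` generates a proper subfield `K` of `F`, with `|F| = p ^ n`, then `|F|` is a power of
`|K| = p ^ d` with exponent at least two, so `d ≤ n / 2`, and `x` is a root of `X ^ p ^ d - X`.
Counting these roots for `1 ≤ d ≤ n / 2` bounds the number of such `x` by
`∑ p ^ d < 2 p ^ (n / 2) ≤ 2 √|F|`.
-/

open Finset Polynomial

theorem Subfield.natCard_sq_le_of_ne_top {F : Type*} [DivisionRing F] [Finite F]
    {K : Subfield F} (hK : K ≠ ⊤) : Nat.card K ^ 2 ≤ Nat.card F := by
  have hF : Nat.card F = Nat.card K ^ Module.finrank K F := Module.natCard_eq_pow_finrank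
  have hr : Module.finrank K F ≠ 1 := fun h ↦ hK <| by
    rw [h, pow_one] at hF
    have := AddSubgroup.eq_top_of_card_eq K.toAddSubgroup hF.symm
    exact SetLike.coe_injective (congrArg SetLike.coe this :)
  rw [hF]
  exact Nat.pow_le_pow_right Nat.card_pos (by have := Module.finrank_pos (R := K) (M := F); omega)

theorem card_filter_pow_eq_self_le {R : Type*} [CommRing R] [IsDomain R] [Fintype R]
    [DecidableEq R] {k : ℕ} (hk : 1 < k) : #{x : R | x ^ k = x} ≤ k := by
  have hdeg : (X ^ k - X : R[X]).natDegree = k := by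
    rw [natDegree_sub_eq_left_of_natDegree_lt] <;> simp [hk]
  have hne : (X ^ k - X : R[X]) ≠ 0 := by
    intro h; simp [h] at hdeg; omega
  refine hdeg ▸ card_le_degree_of_subset_roots fun x hx ↦ ?_
  simp_all [mem_roots hne, sub_eq_zero]

theorem Nat.sum_Icc_one_pow_lt_two_mul_pow {p : ℕ} (hp : 2 ≤ p) (m : ℕ) :
    ∑ d ∈ Icc 1 m, p ^ d < 2 * p ^ m :=
  calc ∑ d ∈ Icc 1 m, p ^ d ≤ ∑ d ∈ range (m + 1), p ^ d :=
        sum_le_sum_of_subset (fun d hd ↦ by simp at hd ⊢; omega)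
    _ = ∑ d ∈ range m, p ^ d + p ^ m := sum_range_succ _ _
    _ < p ^ m + p ^ m := by gcongr; exact Nat.geomSum_lt hp (by simp)
    _ = 2 * p ^ m := (two_mul _).symm

theorem FiniteField.exists_pow_char_pow_eq_self_of_mem_of_ne_top {F : Type*} [Field F] [Fintype F]
    {p n : ℕ} [CharP F p] (hcard : Fintype.card F = p ^ n) {K : Subfield F} (hK : K ≠ ⊤)
    {x : F} (hx : x ∈ K) : ∃ d ∈ Icc 1 (n / 2), x ^ p ^ d = x := by
  have := Fintype.ofFinite K
  obtain ⟨d, hp, hKcard⟩ := FiniteField.card K p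
  refine ⟨d, mem_Icc.2 ⟨d.pos, ?_⟩, ?_⟩
  · have hsq := Subfield.natCard_sq_le_of_ne_top hK
    rw [Nat.card_eq_fintype_card, Nat.card_eq_fintype_card, hKcard, hcard, ← pow_mul,
      Nat.pow_le_pow_iff_right hp.one_lt] at hsq
    omega
  · simpa [hKcard] using congrArg Subtype.val (FiniteField.pow_card (⟨x, hx⟩ : K))

theorem FiniteField.ncard_closure_singleton_ne_top_lt {F : Type*} [Field F] [Fintype F]
    {p n : ℕ} [CharP F p] (hcard : Fintype.card F = p ^ n) :
    {x : F | Subfield.closure {x} ≠ ⊤}.ncard < 2 * p ^ (n / 2) := by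
  classical
  have hp : 2 ≤ p := (CharP.char_is_prime F p).two_le
  have hsub : {x : F | Subfield.closure {x} ≠ ⊤} ⊆
      ↑((Icc 1 (n / 2)).biUnion fun d ↦ {x : F | x ^ p ^ d = x}) := fun x hx ↦ by
    obtain ⟨d, hd, hxd⟩ :=
      exists_pow_char_pow_eq_self_of_mem_of_ne_top hcard hx (Subfield.subset_closure rfl)
    simpa using ⟨d, mem_Icc.1 hd, hxd⟩
  calc {x : F | Subfield.closure {x} ≠ ⊤}.ncard
      ≤ #((Icc 1 (n / 2)).biUnion fun d ↦ {x : F | x ^ p ^ d = x}) :=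
        (Set.ncard_le_ncard hsub).trans_eq (Set.ncard_coe_finset _)
    _ ≤ ∑ d ∈ Icc 1 (n / 2), #{x : F | x ^ p ^ d = x} := card_biUnion_le
    _ ≤ ∑ d ∈ Icc 1 (n / 2), p ^ d := sum_le_sum fun d hd ↦
        card_filter_pow_eq_self_le (Nat.one_lt_pow (by simp at hd; omega) hp)
    _ < 2 * p ^ (n / 2) := Nat.sum_Icc_one_pow_lt_two_mul_pow hp _

theorem stmt_9_general {F : Type*} [Field F] [Fintype F] :
    ({x : F | Subfield.closure {x} ≠ ⊤}.ncard : ℝ) <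
      2 * Real.sqrt (Fintype.card F) := by
  obtain ⟨n, hp, hcard⟩ := FiniteField.card F (ringChar F)
  have hsqrt : ((ringChar F : ℝ) ^ (n / 2 : ℕ)) ≤ Real.sqrt (Fintype.card F) := by
    refine Real.le_sqrt_of_sq_le ?_
    rw [hcard, ← pow_mul]
    push_cast
    exact pow_le_pow_right₀ (by exact_mod_cast hp.one_lt.le) (by omega)
  calc ({x : F | Subfield.closure {x} ≠ ⊤}.ncard : ℝ)
      < 2 * (ringChar F : ℝ) ^ (n / 2 : ℕ) := by
        exact_mod_cast FiniteField.ncard_closure_singleton_ne_top_lt hcard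
    _ ≤ 2 * Real.sqrt (Fintype.card F) := by gcongr

/-- Let `F` be a finite field of characteristic `p`. Then the number of `x ∈ F`
generating (over the prime field) a proper subfield of `F` is strictly less than
`2 · √|F|`. -/
theorem stmt_9 {F : Type*} [Field F] [Fintype F] (p : ℕ) [CharP F p] :
    ({x : F | Subfield.closure {x} ≠ ⊤}.ncard : ℝ) <
      2 * Real.sqrt (Fintype.card F) :=
  stmt_9_general
end
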